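/- arXiv:1707.02899 — 5 statements merged into one kernel-verified Lean document; each statement's English description precedes it below -/
import Mathlib

section
/- For a symmetric 2-(v,k,λ) design of order q = k−λ ≥ 2, the number of points satisfies 4q−1 ≤ v ≤ q²+q+1. -/
open Finset

theorem stmt_2 {X : Type*} [Fintype X] [DecidableEq X]
    (v k lam q : ℕ) (B : Finset (Finset X))
    (hv : Fintype.card X = v) (hBcard : B.card = v)
    (hblocksize : ∀ C ∈ B, C.card = k)
    (hpair : ∀ x y : X, x ≠ y → (B.filter (fun C => x ∈ C ∧ y ∈ C)).card = lam)
    (hblockpair : ∀ C ∈ B, ∀ D ∈ B, C ≠ D → (C ∩ D).card = lam)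
    (hpoint : ∀ x : X, (B.filter (fun C => x ∈ C)).card = k)
    (horder : k = lam + q) (hq : 2 ≤ q)
    (hk2 : 2 ≤ k) (hkv : k ≤ v - 2) :
    4 * q - 1 ≤ v ∧ v ≤ q ^ 2 + q + 1 := by
  have hv4 : 4 ≤ v := by omega
  have hx : Nonempty X := by
    rw [← Fintype.card_pos_iff, hv]; omega
  obtain ⟨x⟩ := hx
  -- double counting: lam * (v - 1) = k * (k - 1)
  have key : lam * (v - 1) = k * (k - 1) := by
    have h1 : ∑ y ∈ univ.erase x, (B.filter (fun C => x ∈ C ∧ y ∈ C)).card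
        = lam * (v - 1) := by
      rw [Finset.sum_congr rfl (fun y hy => hpair x y (Ne.symm (Finset.mem_erase.mp hy).1))]
      rw [Finset.sum_const, Finset.card_erase_of_mem (mem_univ x), card_univ, hv,
        smul_eq_mul, mul_comm]
    have h2 : ∑ y ∈ univ.erase x, (B.filter (fun C => x ∈ C ∧ y ∈ C)).card
        = ∑ C ∈ B, if x ∈ C then C.card - 1 else 0 := by
      simp_rw [Finset.card_filter]
      rw [Finset.sum_comm]
      refine Finset.sum_congr rfl fun C hC => ?_
      by_cases hxC : x ∈ C
      · simp only [hxC, true_and, if_true]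
        rw [← Finset.card_filter]
        have : (univ.erase x).filter (fun y => y ∈ C) = C.erase x := by
          ext y
          simp [Finset.mem_erase, and_comm]
        rw [this, Finset.card_erase_of_mem hxC]
      · simp [hxC]
    have h3 : ∑ C ∈ B, (if x ∈ C then C.card - 1 else 0)
        = k * (k - 1) := by
      rw [← Finset.sum_filter]
      have hcong : ∑ C ∈ B.filter (fun C => x ∈ C), (C.card - 1)
          = ∑ _C ∈ B.filter (fun C => x ∈ C), (k - 1) :=
        Finset.sum_congr rfl fun C hC => by
          rw [hblocksize C (Finset.mem_filter.mp hC).1]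
      rw [hcong, Finset.sum_const, hpoint x, smul_eq_mul]
    rw [← h1, h2, h3]
  -- arithmetic
  obtain ⟨q', rfl⟩ : ∃ q', q = q' + 2 := ⟨q - 2, by omega⟩
  obtain ⟨v', rfl⟩ : ∃ v', v = v' + 4 := ⟨v - 4, by omega⟩
  subst horder
  have e1 : v' + 4 - 1 = v' + 3 := by omega
  have e2 : lam + (q' + 2) - 1 = lam + q' + 1 := by omega
  rw [e1, e2] at key
  have key' : (lam : ℤ) * (v' + 3) = (lam + q' + 2) * (lam + q' + 1) := by
    exact_mod_cast key
  have hlam1 : 1 ≤ lam := by nlinarith [key]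
  have hid : (lam + (q' + 2)) * (lam + q' + 1) = lam * (lam + 2 * q' + 3) + (q' + 2) * (q' + 1) := by
    ring
  have hdvd : lam ∣ (q' + 2) * (q' + 1) := by
    have h := key
    rw [hid] at h
    exact (Nat.dvd_add_right (dvd_mul_right lam _)).mp (h ▸ dvd_mul_right lam _)
  have hlamle : lam ≤ (q' + 2) * (q' + 1) := Nat.le_of_dvd (by positivity) hdvd
  have hlam1' : (1 : ℤ) ≤ (lam : ℤ) := by exact_mod_cast hlam1
  have hlamle' : (lam : ℤ) ≤ ((q' : ℤ) + 2) * ((q' : ℤ) + 1) := by exact_mod_cast hlamle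
  clear hpair hblockpair hblocksize hpoint hBcard hv hkv hk2 hv4 hq key hid hdvd hlamle hlam1 e1 e2 x B
  constructor
  · have h : (4 * q' + 3 : ℤ) ≤ (v' : ℤ) := by
      by_contra hcon
      push_neg at hcon
      have hmul : (lam : ℤ) * (v' : ℤ) ≤ (lam : ℤ) * (4 * q' + 2) :=
        mul_le_mul_of_nonneg_left (by linarith) (by linarith)
      rcases le_or_gt (lam : ℤ) ((q' : ℤ) + 1) with h | h
      · nlinarith [key', hlam1', hmul, mul_nonneg (by linarith : (0:ℤ) ≤ (q':ℤ) + 2 - lam)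
          (by linarith : (0:ℤ) ≤ (q':ℤ) + 1 - lam)]
      · nlinarith [key', hlam1', hmul, mul_nonneg (by linarith : (0:ℤ) ≤ (lam:ℤ) - ((q':ℤ) + 2))
          (by linarith : (0:ℤ) ≤ (lam:ℤ) - ((q':ℤ) + 1))]
    have : 4 * q' + 3 ≤ v' := by exact_mod_cast h
    omega
  · have h : (v' : ℤ) + 3 ≤ ((q' : ℤ) + 2) * ((q' : ℤ) + 3) := by
      by_contra hcon
      push_neg at hcon
      have hmul : (lam : ℤ) * (((q' : ℤ) + 2) * ((q' : ℤ) + 3) + 1) ≤ (lam : ℤ) * ((v' : ℤ) + 3) :=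
        mul_le_mul_of_nonneg_left (by linarith) (by linarith)
      nlinarith [key', hlam1', hmul,
        mul_nonneg (by linarith : (0:ℤ) ≤ (lam:ℤ) - 1)
          (by linarith : (0:ℤ) ≤ ((q':ℤ) + 2) * ((q':ℤ) + 1) - lam)]
    have h2 : (v' : ℤ) + 4 ≤ ((q' : ℤ) + 2) ^ 2 + ((q' : ℤ) + 2) + 1 := by nlinarith [h]
    exact_mod_cast h2
end

section
/- Let X be a v-element set and B a family of v blocks such that for every pair of distinct points x, y, the symmetric difference B(x) △ B(y) has size at least m ≥ 1. If s = ⌈2v·log v / m⌉ satisfies s ≤ v, then there exists a subset S ⊆ B of size s intersecting B(x) △ B(y) for every pair of distinct points x, y. -/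
/-!
An `s`-subset of the `v` blocks misses a given set of at least `m` blocks in at most
`C(v - m, s) ≤ C(v, s) (1 - m/v)^s ≤ C(v, s) e^{-sm/v} ≤ C(v, s) / v²` ways, the last step by the
choice of `s`. There are fewer than `v²` pairs of distinct points, so a union bound leaves an
`s`-subset meeting every symmetric difference `B(x) ∆ B(y)`.
-/

open Finset
open scoped symmDiff

namespace Finset

variable {α ι : Type*} [DecidableEq α]

theorem exists_subset_card_eq_forall_inter_nonempty_of_card_mul_choose_lt
    {B : Finset α} {P : Finset ι} {D : ι → Finset α} {m s : ℕ} (hD : ∀ i ∈ P, m ≤ #(D i ∩ B))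
    (h : #P * (#B - m).choose s < (#B).choose s) :
    ∃ S ⊆ B, #S = s ∧ ∀ i ∈ P, (S ∩ D i).Nonempty := by
  set bad := P.biUnion fun i => (B \ D i).powersetCard s
  have hbad : #bad < #(B.powersetCard s) := calc
    #bad ≤ ∑ i ∈ P, #((B \ D i).powersetCard s) := card_biUnion_le
    _ ≤ ∑ _i ∈ P, (#B - m).choose s := sum_le_sum fun i hi => by
      rw [card_powersetCard, card_sdiff]
      exact Nat.choose_le_choose s (Nat.sub_le_sub_left (hD i hi) _)
    _ = #P * (#B - m).choose s := by rw [sum_const, smul_eq_mul]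
    _ < #(B.powersetCard s) := by rwa [card_powersetCard]
  obtain ⟨S, hS, hSbad⟩ := exists_mem_notMem_of_card_lt_card hbad
  obtain ⟨hSB, hSs⟩ := mem_powersetCard.1 hS
  refine ⟨S, hSB, hSs, fun i hi => ?_⟩
  rw [← not_disjoint_iff_nonempty_inter]
  exact fun hdisj => hSbad <|
    mem_biUnion.2 ⟨i, hi, mem_powersetCard.2 ⟨subset_sdiff.2 ⟨hSB, hdisj⟩, hSs⟩⟩

end Finset

theorem Nat.sub_mul_le_mul_sub {a n : ℕ} (s : ℕ) (han : a ≤ n) : (a - s) * n ≤ (n - s) * a := by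
  rcases le_total a s with h | h
  · simp [Nat.sub_eq_zero_of_le h]
  · zify [h, h.trans han]
    nlinarith

theorem Nat.choose_mul_pow_le_choose_mul_pow {a n : ℕ} (han : a ≤ n) (s : ℕ) :
    a.choose s * n ^ s ≤ n.choose s * a ^ s := by
  induction s with
  | zero => simp
  | succ s ih =>
    refine Nat.le_of_mul_le_mul_right (c := s + 1) ?_ s.succ_pos
    calc a.choose (s + 1) * n ^ (s + 1) * (s + 1)
        = a.choose s * n ^ s * ((a - s) * n) := by
          rw [mul_right_comm, Nat.choose_succ_right_eq]; ring
      _ ≤ n.choose s * a ^ s * ((n - s) * a) :=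
        Nat.mul_le_mul ih (Nat.sub_mul_le_mul_sub s han)
      _ = n.choose (s + 1) * a ^ (s + 1) * (s + 1) := by
          rw [mul_right_comm _ _ (s + 1), Nat.choose_succ_right_eq]; ring

open Real in
theorem sq_mul_sub_pow_le_pow {n m s : ℕ} (hn : 0 < n) (hmn : m ≤ n)
    (hs : 2 * n * log n ≤ s * m) : n ^ 2 * (n - m) ^ s ≤ n ^ s := by
  have hnR : (0 : ℝ) < n := by exact_mod_cast hn
  have hq : ((n - m : ℕ) : ℝ) / n ≤ exp (-(m / n)) := calc
    ((n - m : ℕ) : ℝ) / n = -(m / n) + 1 := by field_simp; push_cast [hmn]; ring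
    _ ≤ exp (-(m / n)) := add_one_le_exp _
  have hqs : (((n - m : ℕ) : ℝ) / n) ^ s ≤ (n ^ 2 : ℝ)⁻¹ := calc
    _ ≤ exp (-(m / n)) ^ s := pow_le_pow_left₀ (by positivity) hq s
    _ = exp (-(s * m / n)) := by rw [← exp_nat_mul]; ring_nf
    _ ≤ exp (-(2 * log n)) := exp_le_exp.2 (by rw [neg_le_neg_iff, le_div_iff₀ hnR]; linarith)
    _ = (n ^ 2 : ℝ)⁻¹ := by rw [exp_neg, two_mul, exp_add, exp_log hnR, sq]
  rw [div_pow, div_le_iff₀ (by positivity)] at hqs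
  have : ((n ^ 2 * (n - m) ^ s : ℕ) : ℝ) ≤ (n ^ s : ℕ) := by
    push_cast
    calc _ ≤ (n : ℝ) ^ 2 * ((n ^ 2 : ℝ)⁻¹ * n ^ s) := by gcongr
      _ = _ := by field_simp
  exact_mod_cast this

theorem mul_choose_sub_lt_choose {n m s k : ℕ} (hk : k < n ^ 2) (hn : 0 < n) (hmn : m ≤ n)
    (hsn : s ≤ n) (hs : 2 * n * Real.log n ≤ s * m) : k * (n - m).choose s < n.choose s := by
  have hpos : 0 < n.choose s * n ^ s := by have := Nat.choose_pos hsn; positivity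
  have hsq := sq_mul_sub_pow_le_pow hn hmn hs
  refine Nat.lt_of_mul_lt_mul_right (a := n ^ s * n ^ 2) ?_
  calc k * (n - m).choose s * (n ^ s * n ^ 2) = k * ((n - m).choose s * n ^ s) * n ^ 2 := by ring
    _ ≤ k * (n.choose s * (n - m) ^ s) * n ^ 2 := by
      gcongr k * ?_ * _; exact Nat.choose_mul_pow_le_choose_mul_pow (Nat.sub_le n m) s
    _ = k * (n.choose s * (n ^ 2 * (n - m) ^ s)) := by ring
    _ ≤ k * (n.choose s * n ^ s) := by gcongr
    _ < n ^ 2 * (n.choose s * n ^ s) := Nat.mul_lt_mul_of_pos_right hk hpos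
    _ = n.choose s * (n ^ s * n ^ 2) := by ring

theorem stmt_4 {X : Type*} [Fintype X] [DecidableEq X]
    (v m s : ℕ) (B : Finset (Finset X))
    (hv : Fintype.card X = v) (hv2 : 2 ≤ v) (hBcard : B.card = v) (hm : 1 ≤ m)
    (hdiff : ∀ x y : X, x ≠ y →
      m ≤ ((B.filter (fun C => x ∈ C)) ∆ (B.filter (fun C => y ∈ C))).card)
    (hs : s = ⌈(2 * (v : ℝ) * Real.log v) / m⌉₊) (hsv : s ≤ v) :
    ∃ S ⊆ B, S.card = s ∧ ∀ x y : X, x ≠ y →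
      (S ∩ ((B.filter (fun C => x ∈ C)) ∆ (B.filter (fun C => y ∈ C)))).Nonempty := by
  set D : X × X → Finset (Finset X) := fun p => {C ∈ B | p.1 ∈ C} ∆ {C ∈ B | p.2 ∈ C}
  have hDB (p : X × X) : D p ⊆ B :=
    symmDiff_le_sup.trans (union_subset (filter_subset _ _) (filter_subset _ _))
  have hmv : m ≤ v := by
    obtain ⟨x, y, hxy⟩ := Fintype.exists_pair_of_one_lt_card (hv ▸ hv2 : 1 < Fintype.card X)
    exact (hdiff x y hxy).trans (hBcard ▸ card_le_card (hDB (x, y)))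
  have hlog : 2 * v * Real.log v ≤ s * m := by
    rw [← div_le_iff₀ (by exact_mod_cast hm), hs]
    exact Nat.le_ceil _
  have hpairs : #(univ : Finset X).offDiag < v ^ 2 := by
    rw [offDiag_card, card_univ, hv, sq]
    exact Nat.sub_lt (by positivity) (by omega)
  obtain ⟨S, hSB, hS, hhit⟩ :=
    exists_subset_card_eq_forall_inter_nonempty_of_card_mul_choose_lt
      (P := univ.offDiag) (D := D)
    (fun p hp => by rw [inter_eq_left.2 (hDB p)]; exact hdiff p.1 p.2 (mem_offDiag.1 hp).2.2)
    (by rw [hBcard]; exact mul_choose_sub_lt_choose hpairs (by omega) hmv hsv hlog)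
  exact ⟨S, hSB, hS, fun x y hxy => hhit (x, y) (by simpa using hxy)⟩
end

section
/- For integers v ≥ 2, m ≥ 1 and s with ⌈2v·log v / m⌉ ≤ s ≤ v − m, the inequality C(v,2)·C(v−m, s) < C(v, s) holds, where C denotes the binomial coefficient and log is the natural logarithm. -/
/-! Since `C(v-m, s) / C(v, s) = ∏_{i<s} (v-m-i)/(v-i) ≤ (1 - m/v)^s ≤ exp(-ms/v)`,
the hypothesis `ms ≥ 2v log v` bounds this ratio by `1/v²`, while `C(v, 2) < v²`. -/

open Real

namespace Nat

theorem descFactorial_mul_pow_le_descFactorial_mul_pow {a b : ℕ} (hab : a ≤ b) (k : ℕ) :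
    a.descFactorial k * b ^ k ≤ b.descFactorial k * a ^ k := by
  induction k with
  | zero => simp
  | succ k ih =>
    have hstep : (a - k) * b ≤ (b - k) * a := by
      rw [Nat.sub_mul, Nat.sub_mul, Nat.mul_comm b a]
      exact Nat.sub_le_sub_left (Nat.mul_le_mul_left k hab) _
    calc a.descFactorial (k + 1) * b ^ (k + 1)
        = ((a - k) * b) * (a.descFactorial k * b ^ k) := by rw [descFactorial_succ]; ring
      _ ≤ ((b - k) * a) * (b.descFactorial k * a ^ k) := Nat.mul_le_mul hstep ih
      _ = b.descFactorial (k + 1) * a ^ (k + 1) := by rw [descFactorial_succ]; ring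

theorem choose_mul_pow_le_choose_mul_pow_s5 {a b : ℕ} (hab : a ≤ b) (k : ℕ) :
    a.choose k * b ^ k ≤ b.choose k * a ^ k := by
  have h := descFactorial_mul_pow_le_descFactorial_mul_pow hab k
  rw [descFactorial_eq_factorial_mul_choose, descFactorial_eq_factorial_mul_choose,
    Nat.mul_assoc, Nat.mul_assoc] at h
  exact Nat.le_of_mul_le_mul_left h (factorial_pos k)

end Nat

theorem sub_pow_mul_sq_le_pow {v m : ℝ} {s : ℕ} (hv : 0 < v) (hmv : m ≤ v)
    (h : 2 * v * log v ≤ m * s) : (v - m) ^ s * v ^ 2 ≤ v ^ s := by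
  have hsub : v - m ≤ v * exp (-(m / v)) := by
    have := add_one_le_exp (-(m / v))
    calc v - m = v * (-(m / v) + 1) := by field_simp; ring
      _ ≤ v * exp (-(m / v)) := by gcongr
  have hexp : exp (-(m * s / v)) ≤ exp (-(2 * log v)) := by
    gcongr
    rw [le_div_iff₀ hv]
    linarith
  have hsq : exp (-(2 * log v)) * v ^ 2 = 1 := by
    rw [exp_neg, ← Nat.cast_ofNat, ← log_pow, exp_log (by positivity),
      inv_mul_cancel₀ (by positivity)]
  calc (v - m) ^ s * v ^ 2 ≤ (v * exp (-(m / v))) ^ s * v ^ 2 := by gcongr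
    _ = v ^ s * (exp (-(m * s / v)) * v ^ 2) := by
        rw [mul_pow, ← exp_nat_mul]; ring_nf
    _ ≤ v ^ s * (exp (-(2 * log v)) * v ^ 2) := by gcongr
    _ = v ^ s := by rw [hsq, mul_one]

theorem choose_sub_mul_sq_le_choose {v m s : ℕ} (hv : 0 < v) (hmv : m ≤ v)
    (h : 2 * (v : ℝ) * log v ≤ m * s) : (v - m).choose s * v ^ 2 ≤ v.choose s := by
  have hchoose : ((v - m).choose s : ℝ) * v ^ s ≤ v.choose s * (v - m : ℝ) ^ s := by
    exact_mod_cast Nat.choose_mul_pow_le_choose_mul_pow_s5 (Nat.sub_le v m) s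
  have hpow := sub_pow_mul_sq_le_pow (by exact_mod_cast hv) (by exact_mod_cast hmv) h
  have hvs : (0 : ℝ) < v ^ s := by positivity
  suffices ((v - m).choose s : ℝ) * v ^ 2 * v ^ s ≤ v.choose s * v ^ s by
    exact_mod_cast le_of_mul_le_mul_right this hvs
  calc ((v - m).choose s : ℝ) * v ^ 2 * v ^ s
      = ((v - m).choose s * v ^ s) * v ^ 2 := by ring
    _ ≤ (v.choose s * (v - m : ℝ) ^ s) * v ^ 2 := by gcongr
    _ = v.choose s * ((v - m : ℝ) ^ s * v ^ 2) := by ring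
    _ ≤ v.choose s * v ^ s := by gcongr

theorem stmt_5 (v m s : ℕ) (hv : 2 ≤ v) (hm : 1 ≤ m)
    (hs₁ : ⌈(2 * (v : ℝ) * Real.log v) / m⌉₊ ≤ s) (hs₂ : s ≤ v - m) :
    v.choose 2 * (v - m).choose s < v.choose s := by
  have hlog : 0 < 2 * (v : ℝ) * log v := by
    have : 0 < log v := log_pos (by exact_mod_cast hv)
    positivity
  have hms : 2 * (v : ℝ) * log v ≤ m * s :=
    (div_le_iff₀' (by exact_mod_cast hm)).1 (Nat.ceil_le.1 hs₁)
  have hs : 0 < s := by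
    by_contra! h0
    simp only [Nat.le_zero.1 h0, CharP.cast_eq_zero, mul_zero] at hms
    linarith
  have hmv : m ≤ v := by omega
  have hratio := choose_sub_mul_sq_le_choose (by omega) hmv hms
  have hpos : 0 < v.choose s := Nat.choose_pos (by omega)
  refine Nat.lt_of_mul_lt_mul_right (a := v ^ 2) ?_
  calc v.choose 2 * (v - m).choose s * v ^ 2
      = v.choose 2 * ((v - m).choose s * v ^ 2) := Nat.mul_assoc _ _ _
    _ ≤ v.choose 2 * v.choose s := Nat.mul_le_mul_left _ hratio
    _ < v ^ 2 * v.choose s :=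
        Nat.mul_lt_mul_of_pos_right (Nat.choose_lt_pow (by omega) le_rfl) hpos
    _ = v.choose s * v ^ 2 := Nat.mul_comm _ _
end

section
/- Every symmetric 2-(v,k,λ) design of order q = k−λ ≥ 2 admits a semi-resolving set for its points of size ⌈v·log v/(k−λ)⌉, i.e., a set S of this many blocks such that every pair of distinct points is separated by some block of S containing exactly one of them. -/
/-!
Each pair of points `x ≠ y` lies in `λ` common blocks and each point in `k` blocks, so exactly
`2(k - λ) = 2q` of the `v` blocks separate the pair. By averaging, some block separates a `2q/v`
fraction of any family of pairs, so `m` greedily chosen blocks leave at most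
`v² (1 - 2q/v)^m ≤ v² exp (-2qm/v)` of the `v(v - 1)` pairs unseparated, which is `< 1` once
`m ≥ v log v / q`.

For `m = ⌈v log v / q⌉ ≤ v` one needs `log v ≤ q`, which follows from `v ≤ q² + q + 1 ≤ exp q`.
For the bound on `v`, let `λ'` be the number of blocks missing two given points. Then
`v = λ + λ' + 2q`, and `λ (v - 1) = k (k - 1)` becomes `λ λ' = q (q - 1)`; hence `λ, λ' ≥ 1` and
`λ + λ' ≤ λ λ' + 1`.
-/

open Finset Real

theorem Real.sq_add_add_one_le_exp {x : ℝ} (hx : 2 ≤ x) : x ^ 2 + x + 1 ≤ exp x := by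
  have h := sum_le_exp_of_nonneg (by linarith : (0 : ℝ) ≤ x) 5
  simp only [sum_range_succ, sum_range_zero, Nat.factorial] at h
  norm_num at h
  nlinarith [mul_nonneg (by linarith : (0:ℝ) ≤ x - 2) (sq_nonneg x)]

theorem Real.log_le_of_le_sq_add_add_one {v q : ℝ} (hv : 0 < v) (hq : 2 ≤ q)
    (h : v ≤ q ^ 2 + q + 1) : log v ≤ q :=
  (log_le_iff_le_exp hv).2 (h.trans (sq_add_add_one_le_exp hq))

theorem Real.sq_le_exp_of_mul_log_le {v q m : ℝ} (hv : 0 < v) (h : v * log v ≤ m * q) :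
    v ^ 2 ≤ exp (2 * q * m / v) := by
  calc v ^ 2 = exp (log v * 2) := by rw [exp_mul, exp_log hv, rpow_two]
    _ ≤ exp (2 * q * m / v) := by
      gcongr
      rw [le_div_iff₀ hv]
      linarith

theorem Nat.add_add_two_mul_le_sq_add_add_one {lam mu q : ℕ} (h : lam * mu + q = q ^ 2)
    (hq : 2 ≤ q) : lam + mu + 2 * q ≤ q ^ 2 + q + 1 := by
  have hprod : 0 < lam * mu := by nlinarith
  have hlam := Nat.pos_of_mul_pos_right hprod
  have hmu := Nat.pos_of_mul_pos_left hprod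
  nlinarith

section Greedy

variable {α β : Type*} (B : Finset β) (sep : β → α → Prop) [∀ b a, Decidable (sep b a)]
  {r : ℕ}

theorem exists_mem_card_filter_not_le_exp_mul (hB : B.Nonempty) (U : Finset α)
    (hr : ∀ a ∈ U, r ≤ #{b ∈ B | sep b a}) :
    ∃ b ∈ B, (#{a ∈ U | ¬ sep b a} : ℝ) ≤ exp (-(r / #B)) * #U := by
  have hsum : ∑ _b ∈ B, (r * #U / #B : ℝ) ≤ ∑ b ∈ B, (#{a ∈ U | sep b a} : ℝ) := by
    have hpos : (0 : ℝ) < #B := by exact_mod_cast hB.card_pos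
    calc ∑ _b ∈ B, (r * #U / #B : ℝ) = #U • (r : ℝ) := by
          rw [sum_const, nsmul_eq_mul, nsmul_eq_mul]; field_simp
      _ ≤ ∑ a ∈ U, (#{b ∈ B | sep b a} : ℝ) :=
          card_nsmul_le_sum _ _ _ (by exact_mod_cast hr)
      _ = ∑ b ∈ B, (#{a ∈ U | sep b a} : ℝ) := by
          exact_mod_cast sum_card_bipartiteAbove_eq_sum_card_bipartiteBelow
            (s := U) (t := B) (Function.swap sep)
  obtain ⟨b, hb, hsep⟩ := exists_le_of_sum_le hB hsum
  refine ⟨b, hb, ?_⟩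
  have hsplit : (#{a ∈ U | sep b a} : ℝ) + #{a ∈ U | ¬ sep b a} = #U := by
    exact_mod_cast card_filter_add_card_filter_not _
  calc (#{a ∈ U | ¬ sep b a} : ℝ) ≤ (-(r / #B) + 1) * #U := by
        rw [add_mul, neg_mul, one_mul, div_mul_eq_mul_div]; linarith
    _ ≤ exp (-(r / #B)) * #U := by gcongr; exact add_one_le_exp _

variable [DecidableEq β]

theorem exists_subset_card_le_card_filter_le_exp_mul (hB : B.Nonempty) (U : Finset α)
    (hr : ∀ a ∈ U, r ≤ #{b ∈ B | sep b a}) (j : ℕ) :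
    ∃ S ⊆ B, #S ≤ j ∧
      (#{a ∈ U | ∀ b ∈ S, ¬ sep b a} : ℝ) ≤ exp (-(r * j / #B)) * #U := by
  induction j with
  | zero => exact ⟨∅, empty_subset _, le_rfl, by simp⟩
  | succ j ih =>
    obtain ⟨S, hSB, hSj, hS⟩ := ih
    obtain ⟨b, hb, hbS⟩ := exists_mem_card_filter_not_le_exp_mul B sep hB
      {a ∈ U | ∀ b ∈ S, ¬ sep b a} fun a ha ↦ hr a (mem_filter.1 ha).1
    refine ⟨insert b S, insert_subset hb hSB, (card_insert_le _ _).trans (by omega), ?_⟩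
    have hfilter : {a ∈ U | ∀ c ∈ insert b S, ¬ sep c a}
        = {a ∈ {a ∈ U | ∀ c ∈ S, ¬ sep c a} | ¬ sep b a} := by
      rw [filter_filter]; simp only [forall_mem_insert, and_comm]
    calc (#{a ∈ U | ∀ c ∈ insert b S, ¬ sep c a} : ℝ)
        ≤ exp (-(r / #B)) * (exp (-(r * j / #B)) * #U) := by
          rw [hfilter]; exact hbS.trans (by gcongr)
      _ = exp (-(r * ↑(j + 1) / #B)) * #U := by
          rw [← mul_assoc, ← exp_add]; push_cast; ring_nf

theorem exists_subset_card_eq_forall_exists_of_card_lt_exp (hB : B.Nonempty) (U : Finset α)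
    (hr : ∀ a ∈ U, r ≤ #{b ∈ B | sep b a}) {j : ℕ} (hjB : j ≤ #B)
    (hU : (#U : ℝ) < exp (r * j / #B)) :
    ∃ S ⊆ B, #S = j ∧ ∀ a ∈ U, ∃ b ∈ S, sep b a := by
  obtain ⟨S, hSB, hSj, hS⟩ := exists_subset_card_le_card_filter_le_exp_mul B sep hB U hr j
  obtain ⟨T, hST, hTB, hTj⟩ := exists_subsuperset_card_eq hSB hSj hjB
  have hempty : {a ∈ U | ∀ b ∈ S, ¬ sep b a} = ∅ := by
    rw [← card_eq_zero, ← Nat.lt_one_iff, ← Nat.cast_lt (α := ℝ), Nat.cast_one]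
    refine hS.trans_lt ?_
    rwa [exp_neg, inv_mul_lt_iff₀ (exp_pos _), mul_one]
  refine ⟨T, hTB, hTj, fun a ha ↦ ?_⟩
  have ha' : a ∉ {a ∈ U | ∀ b ∈ S, ¬ sep b a} := hempty ▸ notMem_empty a
  simp only [mem_filter, ha, true_and, not_forall, not_not] at ha'
  obtain ⟨b, hbS, hb⟩ := ha'
  exact ⟨b, hST hbS, hb⟩

end Greedy

section Design

variable {X : Type*} [DecidableEq X] {B : Finset (Finset X)} {k lam : ℕ}

theorem card_filter_mem_and_notMem_add
    (hpair : ∀ x y : X, x ≠ y → #{C ∈ B | x ∈ C ∧ y ∈ C} = lam)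
    (hpoint : ∀ x : X, #{C ∈ B | x ∈ C} = k) {x y : X} (hxy : x ≠ y) :
    #{C ∈ B | x ∈ C ∧ y ∉ C} + lam = k := by
  rw [← hpair x y hxy, ← hpoint x, ← filter_filter, ← filter_filter, add_comm]
  exact card_filter_add_card_filter_not _

theorem card_filter_separates_add
    (hpair : ∀ x y : X, x ≠ y → #{C ∈ B | x ∈ C ∧ y ∈ C} = lam)
    (hpoint : ∀ x : X, #{C ∈ B | x ∈ C} = k) {x y : X} (hxy : x ≠ y) :
    #{C ∈ B | x ∈ C ∧ y ∉ C ∨ y ∈ C ∧ x ∉ C} + 2 * lam = 2 * k := by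
  have hdisj : Disjoint {C ∈ B | x ∈ C ∧ y ∉ C} {C ∈ B | y ∈ C ∧ x ∉ C} :=
    disjoint_filter.2 fun _ _ h h' ↦ h'.2 h.1
  have hunion : {C ∈ B | x ∈ C ∧ y ∉ C ∨ y ∈ C ∧ x ∉ C}
      = {C ∈ B | x ∈ C ∧ y ∉ C} ∪ {C ∈ B | y ∈ C ∧ x ∉ C} := by
    rw [← filter_or]
  rw [hunion, card_union_of_disjoint hdisj]
  linarith [card_filter_mem_and_notMem_add hpair hpoint hxy,
    card_filter_mem_and_notMem_add hpair hpoint hxy.symm]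

theorem card_filter_notMem_and_notMem_add
    (hpair : ∀ x y : X, x ≠ y → #{C ∈ B | x ∈ C ∧ y ∈ C} = lam)
    (hpoint : ∀ x : X, #{C ∈ B | x ∈ C} = k) {x y : X} (hxy : x ≠ y) :
    #{C ∈ B | x ∉ C ∧ y ∉ C} + 2 * k = #B + lam := by
  have hcompl : {C ∈ B | x ∉ C ∧ y ∉ C} = {C ∈ B | ¬(x ∈ C ∨ y ∈ C)} := by
    simp only [not_or]
  have hunion := card_union_add_card_inter {C ∈ B | x ∈ C} {C ∈ B | y ∈ C}
  rw [← filter_or, ← filter_and, hpair x y hxy, hpoint, hpoint] at hunion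
  have hsplit := card_filter_add_card_filter_not (s := B) (fun C ↦ x ∈ C ∨ y ∈ C)
  rw [hcompl]
  omega

theorem mul_sub_one_eq_card_sub_one_mul [Fintype X]
    (hblocksize : ∀ C ∈ B, #C = k)
    (hpair : ∀ x y : X, x ≠ y → #{C ∈ B | x ∈ C ∧ y ∈ C} = lam)
    (hpoint : ∀ x : X, #{C ∈ B | x ∈ C} = k) (x : X) :
    k * (k - 1) = (Fintype.card X - 1) * lam := by
  have h := card_mul_eq_card_mul (s := {C ∈ B | x ∈ C}) (t := univ.erase x) (m := k - 1)
    (n := lam) (fun C y ↦ y ∈ C) (fun C hC ↦ ?_) (fun y hy ↦ ?_)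
  · rwa [hpoint, card_erase_of_mem (mem_univ x), card_univ] at h
  · obtain ⟨hCB, hxC⟩ := mem_filter.1 hC
    rw [← hblocksize C hCB, ← card_erase_of_mem hxC]
    congr 1
    ext y
    simp [bipartiteAbove, and_comm]
  · rw [bipartiteBelow, filter_filter]
    exact hpair x y (ne_of_mem_erase hy).symm

theorem card_le_sq_add_add_one [Fintype X] (hBcard : #B = Fintype.card X)
    (hblocksize : ∀ C ∈ B, #C = k)
    (hpair : ∀ x y : X, x ≠ y → #{C ∈ B | x ∈ C ∧ y ∈ C} = lam)
    (hpoint : ∀ x : X, #{C ∈ B | x ∈ C} = k) {q : ℕ} (horder : k = lam + q) (hq : 2 ≤ q)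
    {x y : X} (hxy : x ≠ y) :
    Fintype.card X ≤ q ^ 2 + q + 1 := by
  have hmu := card_filter_notMem_and_notMem_add hpair hpoint hxy
  have hcount := mul_sub_one_eq_card_sub_one_mul hblocksize hpair hpoint x
  have hX : 1 ≤ Fintype.card X := Fintype.card_pos_iff.2 ⟨x⟩
  have hk : 1 ≤ k := by omega
  have hprod : lam * #{C ∈ B | x ∉ C ∧ y ∉ C} + q = q ^ 2 := by
    zify [hX, hk] at hcount hmu horder ⊢
    rw [hBcard] at hmu
    linear_combination -hcount + (lam : ℤ) * hmu + ((k : ℤ) - lam + q - 1) * horder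
  have := Nat.add_add_two_mul_le_sq_add_add_one hprod hq
  omega

end Design

theorem stmt_8_general {X : Type*} [Fintype X] [DecidableEq X]
    (v k lam q : ℕ) (B : Finset (Finset X))
    (hv : Fintype.card X = v) (hBcard : B.card = v)
    (hblocksize : ∀ C ∈ B, C.card = k)
    (hpair : ∀ x y : X, x ≠ y → (B.filter (fun C => x ∈ C ∧ y ∈ C)).card = lam)
    (hpoint : ∀ x : X, (B.filter (fun C => x ∈ C)).card = k)
    (horder : k = lam + q) (hq : 2 ≤ q) :
    ∃ S ⊆ B, S.card = ⌈((v : ℝ) * Real.log v) / ((k : ℝ) - lam)⌉₊ ∧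
      ∀ x y : X, x ≠ y → ∃ C ∈ S, Xor' (x ∈ C) (y ∈ C) := by
  have hkq : (k : ℝ) - lam = q := by rw [horder]; push_cast; ring
  rw [hkq]
  obtain hX | ⟨x, y, hxy⟩ : v ≤ 1 ∨ ∃ x y : X, x ≠ y := by
    rw [← hv, ← not_lt, Fintype.one_lt_card_iff]; tauto
  · refine ⟨∅, empty_subset _, ?_, fun x y hxy ↦ ?_⟩
    · interval_cases v <;> simp
    · exact (hxy (Fintype.card_le_one_iff.1 (hv ▸ hX) x y)).elim
  have hvq : v ≤ q ^ 2 + q + 1 :=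
    hv ▸ card_le_sq_add_add_one (hBcard.trans hv.symm) hblocksize hpair hpoint horder hq hxy
  have hv1 : 1 < v := hv ▸ Fintype.one_lt_card_iff.2 ⟨x, y, hxy⟩
  have hq0 : (0 : ℝ) < q := by positivity
  have hlog : log v ≤ q :=
    log_le_of_le_sq_add_add_one (by positivity) (by exact_mod_cast hq) (by exact_mod_cast hvq)
  set m := ⌈(v : ℝ) * log v / q⌉₊
  have hmv : m ≤ #B := by
    rw [hBcard, Nat.ceil_le, div_le_iff₀ hq0]
    gcongr
  have hpairs : (#(univ.offDiag : Finset (X × X)) : ℝ) < exp ((2 * q : ℕ) * m / #B) := by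
    calc (#(univ.offDiag : Finset (X × X)) : ℝ) < (v : ℝ) ^ 2 := by
          rw [offDiag_card, card_univ, hv]
          exact_mod_cast (Nat.sub_lt (by positivity) (by omega)).trans_eq (sq v).symm
      _ ≤ exp ((2 * q : ℕ) * m / #B) := by
          rw [hBcard]; push_cast
          exact sq_le_exp_of_mul_log_le (by positivity) ((div_le_iff₀ hq0).1 (Nat.le_ceil _))
  -- `Xor'` has no `Decidable` instance, so we separate by its unfolding `a ∧ ¬b ∨ b ∧ ¬a`.
  obtain ⟨S, hSB, hSm, hS⟩ := exists_subset_card_eq_forall_exists_of_card_lt_exp B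
    (fun C p ↦ p.1 ∈ C ∧ p.2 ∉ C ∨ p.2 ∈ C ∧ p.1 ∉ C) (card_pos.1 (by omega))
    univ.offDiag
    (fun p hp ↦ by
      linarith [card_filter_separates_add hpair hpoint (mem_offDiag.1 hp).2.2])
    hmv hpairs
  exact ⟨S, hSB, hSm, fun x y hxy ↦ hS (x, y) (by simpa using hxy)⟩

theorem stmt_8 {X : Type*} [Fintype X] [DecidableEq X]
    (v k lam q : ℕ) (B : Finset (Finset X))
    (hv : Fintype.card X = v) (hBcard : B.card = v)
    (hblocksize : ∀ C ∈ B, C.card = k)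
    (hpair : ∀ x y : X, x ≠ y → (B.filter (fun C => x ∈ C ∧ y ∈ C)).card = lam)
    (hblockpair : ∀ C ∈ B, ∀ D ∈ B, C ≠ D → (C ∩ D).card = lam)
    (hpoint : ∀ x : X, (B.filter (fun C => x ∈ C)).card = k)
    (horder : k = lam + q) (hq : 2 ≤ q) :
    ∃ S ⊆ B, S.card = ⌈((v : ℝ) * Real.log v) / ((k : ℝ) - lam)⌉₊ ∧
      ∀ x y : X, x ≠ y → ∃ C ∈ S, Xor' (x ∈ C) (y ∈ C) :=
  stmt_8_general v k lam q B hv hBcard hblocksize hpair hpoint horder hq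
end

section
/- Let Γ be the incidence graph of a symmetric 2-(v,k,λ) design of order q = k−λ ≥ 2, with n = 2v vertices. Then the metric dimension of Γ is at most 2·⌈v·log v/(k−λ)⌉, and consequently μ(Γ) ≤ C·√n·log n for an absolute constant C. -/
open Finset

/-- The incidence graph of a family of blocks `B` over a point set `X`. -/
def incidenceGraph {X : Type*} [DecidableEq X] (B : Finset (Finset X)) :
    SimpleGraph (X ⊕ {C // C ∈ B}) where
  Adj u w :=
    match u, w with
    | Sum.inl x, Sum.inr C => x ∈ C.1
    | Sum.inr C, Sum.inl x => x ∈ C.1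
    | _, _ => False
  symm := ⟨by rintro (x | C) (y | D) h <;> simp_all⟩
  loopless := ⟨by rintro (x | C) h <;> simp_all⟩

/-- A set of vertices `S` resolves a graph `G` if each vertex is determined by its
vector of distances to the elements of `S`. -/
def IsResolvingSet {V : Type*} (G : SimpleGraph V) (S : Finset V) : Prop :=
  ∀ u w : V, (∀ x ∈ S, G.dist u x = G.dist w x) → u = w

/-- The metric dimension of a graph: the least size of a resolving set. -/
noncomputable def metricDim {V : Type*} (G : SimpleGraph V) : ℕ :=
  sInf {s : ℕ | ∃ S : Finset V, S.card = s ∧ IsResolvingSet G S}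

/-! Two distinct points of the design lie in exactly `λ` common blocks, so exactly `2(k - λ) = 2q`
blocks contain one of them but not the other; dually, two distinct blocks are told apart by
exactly `2q` points. Hence at most `v(v - 1)(v - 2q)^m` of the `v^m` tuples of `m` blocks fail to
separate some pair of points, and this is `< v^m` once `m ≥ v log v / q`, because
`(1 - 2q/v)^m ≤ exp(-2qm/v) ≤ v⁻²`. So `m` blocks separate all points and, dually, `m` points
separate all blocks. In the connected bipartite incidence graph their union resolves: the parity of
the distance to a fixed element of the set gives the side of a vertex, and on one side adjacency
(distance `1`) to a separating element tells vertices apart. Finally `λ(v - 1) = k(k - 1)` forces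
`v ≤ q² + q + 1 ≤ 2q²`, so `v/q ≤ √(2v)`. -/
def Separates {α β : Type*} (R : α → β → Prop) (T : Finset β) : Prop :=
  ∀ a a', a ≠ a' → ∃ b ∈ T, ¬(R a b ↔ R a' b)

theorem exists_separates_of_card_mul_pow_lt {α β : Type*} [Fintype α] [Fintype β]
    (R : α → β → Prop) [∀ a b, Decidable (R a b)] {s m : ℕ}
    (hagree : ∀ a a', a ≠ a' → #{b | R a b ↔ R a' b} ≤ s)
    (hcount : Fintype.card α * (Fintype.card α - 1) * s ^ m < Fintype.card β ^ m) :
    ∃ T : Finset β, #T ≤ m ∧ Separates R T := by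
  classical
  obtain ⟨f, -, hf⟩ : ∃ f ∈ (univ : Finset (Fin m → β)),
      f ∉ (univ : Finset α).offDiag.biUnion fun p =>
        Fintype.piFinset fun _ => {b | R p.1 b ↔ R p.2 b} := by
    refine exists_mem_notMem_of_card_lt_card ?_
    calc _ ≤ ∑ p ∈ (univ : Finset α).offDiag,
            #(Fintype.piFinset fun _ : Fin m => {b | R p.1 b ↔ R p.2 b}) := card_biUnion_le
      _ ≤ ∑ _p ∈ (univ : Finset α).offDiag, s ^ m := sum_le_sum fun p hp => by
          rw [Fintype.card_piFinset, prod_const, card_univ, Fintype.card_fin]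
          exact Nat.pow_le_pow_left (hagree _ _ (mem_offDiag.1 hp).2.2) m
      _ < _ := by
          rwa [sum_const, offDiag_card, smul_eq_mul, card_univ, ← Nat.mul_sub_one, card_univ,
            Fintype.card_fun, Fintype.card_fin]
  simp only [mem_biUnion, mem_offDiag, Fintype.mem_piFinset, mem_filter, mem_univ, true_and,
    not_exists, not_and, not_forall, Prod.forall] at hf
  refine ⟨univ.image f, card_image_le.trans (by simp), fun a a' hne => ?_⟩
  obtain ⟨i, hi⟩ := hf a a' hne
  exact ⟨f i, mem_image_of_mem f (mem_univ i), hi⟩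

open Real in
theorem sq_mul_sub_pow_le_pow_s18 {v q : ℝ} {m : ℕ} (hq : 0 < q) (hqv : 2 * q ≤ v)
    (hm : v * log v ≤ m * q) : v ^ 2 * (v - 2 * q) ^ m ≤ v ^ m := by
  have hv : 0 < v := by linarith
  -- `(1 - 2q/v)^m ≤ exp(-2qm/v) ≤ v⁻²`
  have hstep : v - 2 * q ≤ v * exp (-(2 * q / v)) := by
    have := add_one_le_exp (-(2 * q / v))
    calc v - 2 * q = v * (-(2 * q / v) + 1) := by field_simp; ring
      _ ≤ _ := by gcongr
  have hexp : v ^ 2 * exp (-(2 * q / v)) ^ m ≤ 1 := by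
    rw [← exp_nat_mul, ← exp_log (pow_pos hv 2), ← exp_add, exp_le_one_iff, log_pow]
    have hlog : log v ≤ m * q / v := by rw [le_div_iff₀ hv]; linarith
    have hexponent : (m : ℝ) * -(2 * q / v) = -(2 * (m * q / v)) := by ring
    push_cast
    linarith
  calc v ^ 2 * (v - 2 * q) ^ m ≤ v ^ 2 * (v * exp (-(2 * q / v))) ^ m := by
        gcongr
    _ = v ^ m * (v ^ 2 * exp (-(2 * q / v)) ^ m) := by ring
    _ ≤ v ^ m := mul_le_of_le_one_right (by positivity) hexp

theorem mul_sub_one_mul_sub_pow_lt_pow {v q m : ℕ} (hq : 0 < q) (hqv : 2 * q < v)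
    (hm : (v : ℝ) * Real.log v / q ≤ m) : v * (v - 1) * (v - 2 * q) ^ m < v ^ m := by
  have hqR : (0 : ℝ) < q := by exact_mod_cast hq
  have hle := sq_mul_sub_pow_le_pow_s18 (v := v) (m := m) hqR (by exact_mod_cast hqv.le)
    (by rwa [div_le_iff₀ hqR] at hm)
  have hqvR : (2 * q : ℝ) < v := by exact_mod_cast hqv
  have hpos : (0 : ℝ) < (v - 2 * q : ℝ) ^ m := pow_pos (by linarith) m
  rw [← Nat.cast_lt (α := ℝ)]
  push_cast [Nat.cast_sub hqv.le, Nat.cast_sub (by omega : 1 ≤ v)]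
  nlinarith [mul_pos (by linarith : (0 : ℝ) < v) hpos]

theorem metricDim_le_card {V : Type*} {G : SimpleGraph V} {S : Finset V}
    (h : IsResolvingSet G S) : metricDim G ≤ #S :=
  Nat.sInf_le ⟨S, rfl, h⟩

theorem metricDim_eq_zero_of_isEmpty {V : Type*} [IsEmpty V] (G : SimpleGraph V) :
    metricDim G = 0 :=
  Nat.eq_zero_of_le_zero <|
    (metricDim_le_card (S := ∅) fun u => isEmptyElim u).trans_eq card_empty

theorem isResolvingSet_of_coloring {V : Type*} {G : SimpleGraph V} (hG : G.Preconnected)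
    (c : G.Coloring Bool) {S : Finset V} (hS : S.Nonempty)
    (hsep : ∀ u w, u ≠ w → c u = c w → ∃ s ∈ S, ¬(G.Adj u s ↔ G.Adj w s)) :
    IsResolvingSet G S := by
  intro u w hd
  have hparity : ∀ u s, Even (G.dist u s) ↔ (c u ↔ c s) := fun u s => by
    obtain ⟨p, hp⟩ := (hG u s).exists_walk_length_eq_dist
    rw [← hp]
    exact c.even_length_iff_congr p
  by_contra hne
  obtain ⟨s₀, hs₀⟩ := hS
  have hcolor : c u = c w := by
    have h := hparity u s₀
    rw [hd s₀ hs₀, hparity w s₀] at h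
    revert h
    cases c u <;> cases c w <;> cases c s₀ <;> simp
  obtain ⟨s, hs, hadj⟩ := hsep u w hne hcolor
  rw [← SimpleGraph.dist_eq_one_iff_adj, ← SimpleGraph.dist_eq_one_iff_adj, hd s hs] at hadj
  exact hadj Iff.rfl

section IncidenceGraph

variable {X : Type*} [DecidableEq X] {B : Finset (Finset X)}

@[simp]
theorem incidenceGraph_adj_inl_inr {x : X} {C : {C // C ∈ B}} :
    (incidenceGraph B).Adj (.inl x) (.inr C) ↔ x ∈ C.1 := Iff.rfl

@[simp]
theorem incidenceGraph_adj_inr_inl {x : X} {C : {C // C ∈ B}} :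
    (incidenceGraph B).Adj (.inr C) (.inl x) ↔ x ∈ C.1 := Iff.rfl

def incidenceGraph.coloring (B : Finset (Finset X)) : (incidenceGraph B).Coloring Bool :=
  SimpleGraph.Coloring.mk Sum.isLeft fun {u w} h => by
    rcases u with x | C <;> rcases w with y | D <;> first | exact h.elim | simp

theorem incidenceGraph_preconnected
    (hcommon : ∀ x y : X, x ≠ y → ∃ C ∈ B, x ∈ C ∧ y ∈ C) (hne : ∀ C ∈ B, C.Nonempty) :
    (incidenceGraph B).Preconnected := by
  have hpoints (x y : X) : (incidenceGraph B).Reachable (.inl x) (.inl y) := by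
    obtain rfl | hxy := eq_or_ne x y
    · rfl
    obtain ⟨C, hC, hx, hy⟩ := hcommon x y hxy
    exact (incidenceGraph_adj_inl_inr (C := ⟨C, hC⟩)).2 hx |>.reachable.trans
      ((incidenceGraph_adj_inr_inl (C := ⟨C, hC⟩)).2 hy).reachable
  have hpoint (u : X ⊕ {C // C ∈ B}) : ∃ x, (incidenceGraph B).Reachable (.inl x) u := by
    rcases u with x | C
    · exact ⟨x, .rfl⟩
    obtain ⟨x, hx⟩ := hne C.1 C.2
    exact ⟨x, (incidenceGraph_adj_inl_inr.2 hx).reachable⟩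
  intro u w
  obtain ⟨x, hx⟩ := hpoint u
  obtain ⟨y, hy⟩ := hpoint w
  exact hx.symm.trans ((hpoints x y).trans hy)

theorem incidenceGraph_isResolvingSet_disjSum (hconn : (incidenceGraph B).Preconnected)
    {P : Finset X} {T : Finset {C // C ∈ B}}
    (hP : Separates (fun (C : {C // C ∈ B}) x => x ∈ C.1) P)
    (hT : Separates (fun x (C : {C // C ∈ B}) => x ∈ C.1) T) (hT₀ : T.Nonempty) :
    IsResolvingSet (incidenceGraph B) (P.disjSum T) := by
  refine isResolvingSet_of_coloring hconn (incidenceGraph.coloring B)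
    (let ⟨C, hC⟩ := hT₀; ⟨.inr C, inr_mem_disjSum.2 hC⟩) ?_
  rintro (x | C) (y | D) hne hcolor
  · obtain ⟨C, hC, h⟩ := hT x y (fun h => hne (h ▸ rfl))
    exact ⟨.inr C, inr_mem_disjSum.2 hC, by simpa using h⟩
  · cases hcolor
  · cases hcolor
  · obtain ⟨x, hx, h⟩ := hP C D (fun h => hne (h ▸ rfl))
    exact ⟨.inl x, inl_mem_disjSum.2 hx, by simpa using h⟩

end IncidenceGraph

theorem card_filter_iff_add_card_filter_add_card_filter {ι : Type*} (s : Finset ι)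
    (p q : ι → Prop) [DecidablePred p] [DecidablePred q] :
    #{i ∈ s | p i ↔ q i} + #{i ∈ s | p i} + #{i ∈ s | q i} =
      #s + 2 * #{i ∈ s | p i ∧ q i} := by
  rw [card_filter, card_filter, card_filter, card_filter, card_eq_sum_ones, mul_sum,
    ← sum_add_distrib, ← sum_add_distrib, ← sum_add_distrib]
  refine sum_congr rfl fun i _ => ?_
  by_cases p i <;> by_cases q i <;> simp [*]

section Design

variable {X : Type*} [DecidableEq X] {B : Finset (Finset X)} {k lam : ℕ}

theorem card_blocks_mem_iff_mem_add
    (hpair : ∀ x y : X, x ≠ y → #{C ∈ B | x ∈ C ∧ y ∈ C} = lam)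
    (hdeg : ∀ x : X, #{C ∈ B | x ∈ C} = k) {x y : X} (hxy : x ≠ y) :
    #{C ∈ B | x ∈ C ↔ y ∈ C} + 2 * k = #B + 2 * lam := by
  have h := card_filter_iff_add_card_filter_add_card_filter B (x ∈ ·) (y ∈ ·)
  rw [hdeg, hdeg, hpair x y hxy] at h
  omega

theorem card_points_mem_iff_mem_add [Fintype X] {C D : Finset X} (hC : #C = k) (hD : #D = k)
    (hCD : #(C ∩ D) = lam) :
    #{x | x ∈ C ↔ x ∈ D} + 2 * k = Fintype.card X + 2 * lam := by
  have h := card_filter_iff_add_card_filter_add_card_filter univ (· ∈ C) (· ∈ D)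
  simp only [filter_and, filter_mem_eq_inter, univ_inter, card_univ, hC, hD, hCD] at h
  omega

theorem lam_mul_card_sub_one_eq [Fintype X] (hblk : ∀ C ∈ B, #C = k)
    (hpair : ∀ x y : X, x ≠ y → #{C ∈ B | x ∈ C ∧ y ∈ C} = lam) {x : X}
    (hdeg : #{C ∈ B | x ∈ C} = k) :
    lam * (Fintype.card X - 1) = k * (k - 1) := by
  have h := card_mul_eq_card_mul (s := univ.erase x) (t := {C ∈ B | x ∈ C}) (fun y C => y ∈ C)
    (m := lam) (n := k - 1)
    (fun y hy => by
      rw [bipartiteAbove, filter_filter]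
      exact hpair x y (ne_of_mem_erase hy).symm)
    (fun C hC => by
      obtain ⟨hCB, hxC⟩ := mem_filter.1 hC
      rw [bipartiteBelow, ← hblk C hCB, ← card_erase_of_mem hxC]
      congr 1
      ext y
      simp [and_comm])
  rwa [card_erase_of_mem (mem_univ x), card_univ, hdeg, mul_comm] at h

theorem lam_pos_and_order_bounds {v k lam q : ℕ} (h : lam * (v - 1) = k * (k - 1))
    (hk : k = lam + q) (hq : 2 ≤ q) : 0 < lam ∧ 2 * q < v ∧ v ≤ q ^ 2 + q + 1 := by
  subst hk
  have hv : 1 ≤ v := by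
    by_contra! hv
    simp [Nat.lt_one_iff.1 hv] at h
    omega
  have hlam : 1 ≤ lam := by
    by_contra! hlam
    simp [Nat.lt_one_iff.1 hlam] at h
    omega
  zify [hv, (by omega : 1 ≤ lam + q)] at h ⊢
  -- with `D = v - lam - 2q`: `lam * D = q^2 - q > 0`, and `(lam - 1)(D - 1) ≥ 0` gives
  -- `v = lam + D + 2q ≤ q^2 + q + 1`
  have hD : (lam : ℤ) * (v - lam - 2 * q) = q ^ 2 - q := by linear_combination h
  have hD1 : (1 : ℤ) ≤ v - lam - 2 * q := by
    by_contra! hD1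
    nlinarith
  exact ⟨by omega, by nlinarith, by nlinarith⟩

theorem exists_blocks_separating_points [Fintype X] {v q m : ℕ} (hX : Fintype.card X = v)
    (hB : #B = v) (hpair : ∀ x y : X, x ≠ y → #{C ∈ B | x ∈ C ∧ y ∈ C} = lam)
    (hdeg : ∀ x : X, #{C ∈ B | x ∈ C} = k) (hk : k = lam + q)
    (hcount : v * (v - 1) * (v - 2 * q) ^ m < v ^ m) :
    ∃ T : Finset {C // C ∈ B}, #T ≤ m ∧
      Separates (fun x (C : {C // C ∈ B}) => x ∈ C.1) T := by
  refine exists_separates_of_card_mul_pow_lt _ (s := v - 2 * q) (fun x y hxy => ?_)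
    (by rwa [hX, Fintype.card_coe, hB])
  rw [card_filter, sum_coe_sort B fun C => if x ∈ C ↔ y ∈ C then 1 else 0, ← card_filter]
  have := card_blocks_mem_iff_mem_add hpair hdeg hxy
  omega

theorem exists_points_separating_blocks [Fintype X] {v q m : ℕ} (hX : Fintype.card X = v)
    (hB : #B = v) (hblk : ∀ C ∈ B, #C = k)
    (hint : ∀ C ∈ B, ∀ D ∈ B, C ≠ D → #(C ∩ D) = lam) (hk : k = lam + q)
    (hcount : v * (v - 1) * (v - 2 * q) ^ m < v ^ m) :
    ∃ P : Finset X, #P ≤ m ∧ Separates (fun (C : {C // C ∈ B}) x => x ∈ C.1) P := by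
  refine exists_separates_of_card_mul_pow_lt _ (s := v - 2 * q) (fun C D hCD => ?_)
    (by rwa [hX, Fintype.card_coe, hB])
  have := card_points_mem_iff_mem_add (hblk C C.2) (hblk D D.2)
    (hint C C.2 D D.2 (Subtype.coe_injective.ne hCD))
  omega

end Design

open Real in
theorem two_mul_ceil_le_three_mul_sqrt_mul_log {v q : ℝ} (hq : 2 ≤ q) (hv : 3 ≤ v)
    (hvq : v ≤ q ^ 2 + q + 1) :
    2 * (⌈v * log v / q⌉₊ : ℝ) ≤ 3 * √(2 * v) * log (2 * v) := by
  have hlog : 0 ≤ log v := log_nonneg (by linarith)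
  have hdiv : v / q ≤ √(2 * v) := by
    rw [le_sqrt (by positivity) (by positivity), div_pow, div_le_iff₀ (by positivity)]
    have hv2q : v ≤ 2 * q ^ 2 := by nlinarith
    nlinarith [mul_le_mul_of_nonneg_left hv2q (by linarith : 0 ≤ v)]
  have hmain : v * log v / q ≤ √(2 * v) * log (2 * v) := by
    rw [mul_div_right_comm]
    exact mul_le_mul hdiv (log_le_log (by positivity) (by linarith)) hlog (sqrt_nonneg _)
  have hceil := Nat.ceil_lt_add_one (show 0 ≤ v * log v / q by positivity)
  have hsqrt : 2 ≤ √(2 * v) := by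
    rw [le_sqrt (by norm_num) (by positivity)]
    linarith
  have hlog2 : 1 ≤ log (2 * v) := by
    rw [le_log_iff_exp_le (by positivity)]
    linarith [exp_one_lt_d9]
  nlinarith

theorem stmt_18 :
    ∃ Cst : ℝ, 0 < Cst ∧
      ∀ (X : Type) [Fintype X] [DecidableEq X]
        (v k lam q : ℕ) (B : Finset (Finset X)),
        Fintype.card X = v → B.card = v →
        (∀ C ∈ B, C.card = k) →
        (∀ x y : X, x ≠ y → (B.filter (fun C => x ∈ C ∧ y ∈ C)).card = lam) →
        (∀ C ∈ B, ∀ D ∈ B, C ≠ D → (C ∩ D).card = lam) →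
        (∀ x : X, (B.filter (fun C => x ∈ C)).card = k) →
        k = lam + q → 2 ≤ q →
        metricDim (incidenceGraph B) ≤
            2 * ⌈((v : ℝ) * Real.log v) / ((k : ℝ) - lam)⌉₊ ∧
          (metricDim (incidenceGraph B) : ℝ) ≤
            Cst * Real.sqrt (2 * v) * Real.log (2 * v) := by
  refine ⟨3, by norm_num, fun X _ _ v k lam q B hX hB hblk hpair hint hdeg hk hq => ?_⟩
  obtain hX₀ | ⟨⟨x₀⟩⟩ := isEmpty_or_nonempty X
  · obtain rfl : v = 0 := hX ▸ Fintype.card_eq_zero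
    obtain rfl : B = ∅ := card_eq_zero.1 hB
    simp [metricDim_eq_zero_of_isEmpty]
  obtain ⟨hlam, hqv, hvq⟩ :=
    lam_pos_and_order_bounds (hX ▸ lam_mul_card_sub_one_eq hblk hpair (hdeg x₀)) hk hq
  have hkq : (k : ℝ) - lam = q := by rw [hk]; push_cast; ring
  rw [hkq]
  set m := ⌈(v : ℝ) * Real.log v / q⌉₊
  have hcount := mul_sub_one_mul_sub_pow_lt_pow (m := m) (by omega) hqv (Nat.le_ceil _)
  obtain ⟨T, hTm, hT⟩ := exists_blocks_separating_points hX hB hpair hdeg hk hcount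
  obtain ⟨P, hPm, hP⟩ := exists_points_separating_blocks hX hB hblk hint hk hcount
  have : Nontrivial X := Fintype.one_lt_card_iff_nontrivial.1 (by rw [hX]; omega)
  obtain ⟨x₁, hx₁⟩ := exists_ne x₀
  have hconn : (incidenceGraph B).Preconnected := by
    refine incidenceGraph_preconnected (fun x y hxy => ?_) (fun C hC => ?_)
    · obtain ⟨C, hC⟩ := card_pos.1 (hpair x y hxy ▸ hlam)
      exact ⟨C, (mem_filter.1 hC).1, (mem_filter.1 hC).2⟩
    · exact card_pos.1 (by rw [hblk C hC]; omega)
  have hres := incidenceGraph_isResolvingSet_disjSum hconn hP hT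
    (let ⟨C, hC, _⟩ := hT x₁ x₀ hx₁; ⟨C, hC⟩)
  have hdim : metricDim (incidenceGraph B) ≤ 2 * m :=
    (metricDim_le_card hres).trans (by rw [card_disjSum]; omega)
  refine ⟨hdim, ?_⟩
  calc (metricDim (incidenceGraph B) : ℝ) ≤ 2 * m := by exact_mod_cast hdim
    _ ≤ 3 * √(2 * v) * Real.log (2 * v) :=
      two_mul_ceil_le_three_mul_sqrt_mul_log (by exact_mod_cast hq) (by norm_cast; omega)
        (by exact_mod_cast hvq)
end
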